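/- Let T : X^n → ℤ have sensitivity 1 (|T(X) − T(X')| ≤ 1 for all X, X' at Hamming distance 1). Then the family of distributions {Tulap(T(X), b = e^{−ε}, q = 2δb/(1 − b + 2δb)) : X ∈ X^n} satisfies (ε, δ)-differential privacy. -/

import Mathlib

open MeasureTheory Real

/-- cdf of `Tulap(0,b,0)`, the distribution of `DLap(b) + Unif(-1/2,1/2)`. -/
noncomputable def tulapCdf0 (b : ℝ) (x : ℝ) : ℝ :=
  if x ≤ 0 then b ^ (-(round x)) / (1 + b) * (b + (x - round x + 1/2) * (1 - b))
  else 1 - b ^ (round x) / (1 + b) * (b + ((round x : ℝ) - x + 1/2) * (1 - b))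

/-- Density of `Tulap(0,b,q)`: the density of `DLap(b) + Unif(-1/2,1/2)`, truncated to
the central `1-q` probability mass and renormalized. -/
noncomputable def tulapDensity (b q : ℝ) (x : ℝ) : ℝ :=
  if q/2 ≤ tulapCdf0 b x ∧ tulapCdf0 b x ≤ 1 - q/2 then
    (1 - b) / (1 + b) * b ^ (round x).natAbs / (1 - q)
  else 0

/-- The `Tulap(m,b,q)` distribution as a measure on ℝ. -/
noncomputable def tulapMeasure (m b q : ℝ) : Measure ℝ :=
  MeasureTheory.volume.withDensity (fun x => ENNReal.ofReal (tulapDensity b q (x - m)))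

/-!
On its truncation window the density of `Tulap(m, b, q)` is proportional to `b ^ |round (x - m)|`,
so moving `m` by one changes it by a factor at most `1 / b = exp ε`, except on the strip of width
one where the window and its translate disagree. That strip starts where the cdf `F` equals `q / 2`
(or ends where it equals `1 - q / 2`), so the recurrence `b * F (t + 1) ≤ F t` (or its mirror
image) bounds its mass by `(1 / b - 1) * (q / 2) / (1 - q)`, which is `δ` for the given `q`.

`tulapCdf0 b` interpolates the discrete Laplace cdf `dlapCdfLt b` linearly between the points
`k - 1/2`; hence it is continuous with right derivative `dlapPmf b (round x)`, the untruncated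
density, and integrals of the density are differences of `F`.
-/

open Set Filter

lemma setLIntegral_le_mul_add {α : Type*} [MeasurableSpace α] {μ : Measure α}
    {f g : α → ENNReal} {N : Set α} {c δ : ENNReal} (hg : Measurable g)
    (hfg : ∀ x ∉ N, f x ≤ c * g x) (hN : ∫⁻ x in N, f x ∂μ ≤ δ) (A : Set α) :
    ∫⁻ x in A, f x ∂μ ≤ c * ∫⁻ x in A, g x ∂μ + δ :=
  calc ∫⁻ x in A, f x ∂μ ≤ ∫⁻ x in A \ N ∪ N, f x ∂μ := lintegral_mono_set (subset_sdiff_union A N)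
    _ ≤ ∫⁻ x in A \ N, f x ∂μ + ∫⁻ x in N, f x ∂μ := lintegral_union_le _ _ _
    _ ≤ ∫⁻ x in A \ N, c * g x ∂μ + δ :=
        add_le_add (setLIntegral_mono (hg.const_mul c) fun x hx => hfg x hx.2) hN
    _ = c * ∫⁻ x in A \ N, g x ∂μ + δ := by rw [lintegral_const_mul c hg]
    _ ≤ c * ∫⁻ x in A, g x ∂μ + δ := by gcongr; exact sdiff_subset

lemma measurable_comp_round {β : Type*} [MeasurableSpace β] (g : ℤ → β) :
    Measurable fun x : ℝ => g (round x) := by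
  simp only [round_eq]
  exact measurable_from_top.comp (measurable_add_const _).floor

section RoundInterpolation

variable {C p : ℤ → ℝ} {f : ℝ → ℝ}

lemma eq_affine_of_mem_Icc (hC : ∀ k, C (k + 1) = C k + p k)
    (hf : ∀ x, f x = C (round x) + (x - round x + 1 / 2) * p (round x))
    {k : ℤ} {x : ℝ} (hx : x ∈ Icc ((k : ℝ) - 1 / 2) (k + 1 / 2)) :
    f x = C k + (x - k + 1 / 2) * p k := by
  rcases hx.2.lt_or_eq with hlt | rfl
  · rw [hf, round_eq_iff.2 ⟨hx.1, hlt⟩]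
  · rw [hf, (round_eq_iff (n := k + 1)).2 (by constructor <;> push_cast <;> linarith), hC]
    push_cast
    ring

lemma continuous_of_eq_round_affine (hC : ∀ k, C (k + 1) = C k + p k)
    (hf : ∀ x, f x = C (round x) + (x - round x + 1 / 2) * p (round x)) : Continuous f := by
  refine LocallyFinite.continuous (f := fun k : ℤ => Icc ((k : ℝ) - 1 / 2) (k + 1 / 2))
    (locallyFinite_Icc_of_tendsto ?_ ?_) ?_ (fun _ => isClosed_Icc) fun k => ?_
  · exact tendsto_atTop_add_const_right _ _ tendsto_intCast_atTop_atTop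
  · exact tendsto_atBot_add_const_right _ _ (tendsto_intCast_atBot_iff.2 tendsto_id)
  · refine eq_univ_of_forall fun x => mem_iUnion.2 ⟨round x, ?_⟩
    have := abs_le.1 (abs_sub_round x)
    constructor <;> linarith
  · exact (Continuous.continuousOn (by fun_prop)).congr fun x hx => eq_affine_of_mem_Icc hC hf hx

lemma hasDerivWithinAt_Ioi_of_eq_round_affine
    (hf : ∀ x, f x = C (round x) + (x - round x + 1 / 2) * p (round x)) (x : ℝ) :
    HasDerivWithinAt f (p (round x)) (Ioi x) x := by
  have hx := round_eq_iff.1 (rfl : round x = round x)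
  have hline : HasDerivAt (fun y => C (round x) + (y - round x + 1 / 2) * p (round x))
      (p (round x)) x := by
    simpa using ((((hasDerivAt_id x).sub_const (round x : ℝ)).add_const (1 / 2 : ℝ)).mul_const
      (p (round x))).const_add (C (round x))
  refine hline.hasDerivWithinAt.congr_of_eventuallyEq ?_ (hf x)
  filter_upwards [Ioo_mem_nhdsGT hx.2] with y hy
  rw [hf, round_eq_iff.2 ⟨by linarith [hx.1, hy.1], hy.2⟩]

end RoundInterpolation

section DiscreteLaplace

variable {b : ℝ}

noncomputable def dlapPmf (b : ℝ) (k : ℤ) : ℝ := (1 - b) / (1 + b) * b ^ k.natAbs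

/-- `ℙ(D < k)` for `D ∼ DLap(b)`. -/
noncomputable def dlapCdfLt (b : ℝ) (k : ℤ) : ℝ :=
  if k ≤ 0 then b ^ (k.natAbs + 1) / (1 + b) else 1 - b ^ k.natAbs / (1 + b)

lemma dlapPmf_pos (hb0 : 0 < b) (hb1 : b < 1) (k : ℤ) : 0 < dlapPmf b k := by
  have : 0 < 1 - b := by linarith
  unfold dlapPmf
  positivity

lemma dlapPmf_le_one (hb0 : 0 < b) (hb1 : b < 1) (k : ℤ) : dlapPmf b k ≤ 1 := by
  have hc : (1 - b) / (1 + b) ≤ 1 := by rw [div_le_one (by linarith)]; linarith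
  exact mul_le_one₀ hc (pow_nonneg hb0.le _) (pow_le_one₀ hb0.le hb1.le)

lemma mul_dlapPmf_le (hb0 : 0 ≤ b) (hb1 : b ≤ 1) {j k : ℤ} (hjk : |j - k| ≤ 1) :
    b * dlapPmf b j ≤ dlapPmf b k := by
  have hexp : k.natAbs ≤ j.natAbs + 1 := by
    have := abs_le.1 hjk
    omega
  have hc : 0 ≤ (1 - b) / (1 + b) := div_nonneg (by linarith) (by linarith)
  calc b * dlapPmf b j = (1 - b) / (1 + b) * b ^ (j.natAbs + 1) := by
        unfold dlapPmf; ring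
    _ ≤ dlapPmf b k := mul_le_mul_of_nonneg_left (pow_le_pow_of_le_one hb0 hb1 hexp) hc

lemma dlapCdfLt_add_one (hb : 1 + b ≠ 0) (k : ℤ) :
    dlapCdfLt b (k + 1) = dlapCdfLt b k + dlapPmf b k := by
  unfold dlapCdfLt dlapPmf
  rcases lt_trichotomy k 0 with hk | rfl | hk
  · obtain ⟨n, rfl⟩ := Int.exists_eq_neg_ofNat hk.le
    obtain ⟨m, rfl⟩ : ∃ m, n = m + 1 := ⟨n - 1, by omega⟩
    rw [if_pos (by omega), if_pos hk.le, show (-((m + 1 : ℕ) : ℤ) + 1).natAbs + 1 = m + 1 by omega]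
    simp only [Int.natAbs_neg, Int.natAbs_natCast]
    field_simp
    ring
  · rw [zero_add, if_neg (by decide), if_pos le_rfl]
    simp only [Int.natAbs_one, Int.natAbs_zero, pow_one, pow_zero, zero_add, mul_one]
    field_simp
    ring
  · lift k to ℕ using hk.le
    rw [if_neg (by omega), if_neg (by omega)]
    simp only [Int.natAbs_natCast, show ((k : ℤ) + 1).natAbs = k + 1 by omega]
    field_simp
    ring

lemma mul_dlapCdfLt_add_one_le (hb0 : 0 < b) (hb1 : b < 1) (k : ℤ) :
    b * dlapCdfLt b (k + 1) ≤ dlapCdfLt b k := by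
  suffices b * dlapPmf b k ≤ (1 - b) * dlapCdfLt b k by
    rw [dlapCdfLt_add_one (by linarith)]; linarith
  have hpow : 0 ≤ (1 - b) * (1 + b) * (1 - b ^ k.natAbs) :=
    mul_nonneg (mul_nonneg (by linarith) (by linarith))
      (sub_nonneg.2 (pow_le_one₀ hb0.le hb1.le))
  unfold dlapCdfLt dlapPmf
  split_ifs
  · exact le_of_eq (by ring)
  · rw [div_mul_eq_mul_div, mul_div_assoc, ← sub_nonneg]
    field_simp
    linarith

lemma mul_one_sub_dlapCdfLt_le (hb0 : 0 < b) (hb1 : b < 1) (k : ℤ) :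
    b * (1 - dlapCdfLt b k) ≤ 1 - dlapCdfLt b (k + 1) := by
  suffices dlapPmf b k ≤ (1 - b) * (1 - dlapCdfLt b k) by
    rw [dlapCdfLt_add_one (by linarith)]; linarith
  have hpow : 0 ≤ (1 - b) * (1 + b) * (1 - b ^ k.natAbs) :=
    mul_nonneg (mul_nonneg (by linarith) (by linarith))
      (sub_nonneg.2 (pow_le_one₀ hb0.le hb1.le))
  unfold dlapCdfLt dlapPmf
  split_ifs
  · rw [← sub_nonneg, pow_succ]
    field_simp
    linarith
  · exact le_of_eq (by ring)

end DiscreteLaplace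

section Tulap

variable {b q : ℝ}

lemma tulapCdf0_eq (hb : 1 + b ≠ 0) (x : ℝ) :
    tulapCdf0 b x = dlapCdfLt b (round x) + (x - round x + 1 / 2) * dlapPmf b (round x) := by
  have hx := round_eq_iff.1 (rfl : round x = round x)
  unfold tulapCdf0 dlapCdfLt dlapPmf
  by_cases hx0 : x ≤ 0
  · have hr : round x ≤ 0 := by
      have : round x < 1 := by exact_mod_cast (show (round x : ℝ) < 1 by linarith [hx.1])
      omega
    obtain ⟨n, hn⟩ := Int.exists_eq_neg_ofNat hr
    rw [if_pos hx0, if_pos hr, hn, neg_neg, zpow_natCast, pow_succ]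
    simp only [Int.natAbs_neg, Int.natAbs_natCast, Int.cast_neg, Int.cast_natCast]
    field_simp
  · have hr : 0 ≤ round x := by
      have : -1 < round x := by exact_mod_cast (show (-1 : ℝ) < round x by linarith [hx.2])
      omega
    obtain ⟨n, hn⟩ := Int.eq_ofNat_of_zero_le hr
    rw [if_neg hx0, hn, zpow_natCast]
    simp only [Int.natAbs_natCast, Int.cast_natCast]
    split_ifs with h
    · simp only [show n = 0 by omega, pow_zero, zero_add, pow_one, CharP.cast_eq_zero]
      field_simp
      ring
    · field_simp
      ring

lemma continuous_tulapCdf0 (hb : 0 < b) : Continuous (tulapCdf0 b) :=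
  continuous_of_eq_round_affine (dlapCdfLt_add_one (by linarith)) (tulapCdf0_eq (by linarith))

lemma hasDerivWithinAt_tulapCdf0 (hb : 0 < b) (x : ℝ) :
    HasDerivWithinAt (tulapCdf0 b) (dlapPmf b (round x)) (Ioi x) x :=
  hasDerivWithinAt_Ioi_of_eq_round_affine (tulapCdf0_eq (by linarith)) x

lemma mul_tulapCdf0_add_one_le (hb0 : 0 < b) (hb1 : b < 1) (t : ℝ) :
    b * tulapCdf0 b (t + 1) ≤ tulapCdf0 b t := by
  have hu : 0 ≤ t - round t + 1 / 2 := by linarith [(round_eq_iff.1 (rfl : round t = round t)).1]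
  have hp := mul_le_mul_of_nonneg_left
    (mul_dlapPmf_le hb0.le hb1.le (j := round t + 1) (k := round t) (by simp)) hu
  rw [tulapCdf0_eq (by linarith), tulapCdf0_eq (by linarith), round_add_one]
  push_cast
  linarith [mul_dlapCdfLt_add_one_le hb0 hb1 (round t)]

lemma mul_one_sub_tulapCdf0_sub_one_le (hb0 : 0 < b) (hb1 : b < 1) (t : ℝ) :
    b * (1 - tulapCdf0 b (t - 1)) ≤ 1 - tulapCdf0 b t := by
  have hu : 0 ≤ round t + 1 / 2 - t := by linarith [(round_eq_iff.1 (rfl : round t = round t)).2]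
  have hp := mul_le_mul_of_nonneg_left
    (mul_dlapPmf_le hb0.le hb1.le (j := round t - 1) (k := round t) (by simp)) hu
  -- for `k = round t`: `1 - F t = 1 - dlapCdfLt b (k + 1) + (k + 1/2 - t) * dlapPmf b k`,
  -- and likewise at `t - 1`
  have hC := dlapCdfLt_add_one (b := b) (by linarith) (round t - 1)
  rw [sub_add_cancel] at hC
  rw [tulapCdf0_eq (by linarith), tulapCdf0_eq (by linarith), round_sub_one]
  push_cast
  linarith [mul_one_sub_dlapCdfLt_le hb0 hb1 (round t),
    dlapCdfLt_add_one (b := b) (by linarith) (round t), congrArg (b * ·) hC]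

lemma intervalIntegrable_dlapPmf_round (hb0 : 0 < b) (hb1 : b < 1) (s t : ℝ) :
    IntervalIntegrable (fun x => dlapPmf b (round x)) volume s t := by
  refine (intervalIntegrable_const (c := (1 : ℝ))).mono_fun
    (measurable_comp_round _).aestronglyMeasurable (ae_of_all _ fun x => ?_)
  simpa [abs_of_pos (dlapPmf_pos hb0 hb1 _)] using dlapPmf_le_one hb0 hb1 (round x)

lemma integral_dlapPmf_round (hb0 : 0 < b) (hb1 : b < 1) (s t : ℝ) :
    ∫ x in s..t, dlapPmf b (round x) = tulapCdf0 b t - tulapCdf0 b s :=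
  intervalIntegral.integral_eq_sub_of_hasDeriv_right (continuous_tulapCdf0 hb0).continuousOn
    (fun x _ => hasDerivWithinAt_tulapCdf0 hb0 x) (intervalIntegrable_dlapPmf_round hb0 hb1 s t)

lemma strictMono_tulapCdf0 (hb0 : 0 < b) (hb1 : b < 1) : StrictMono (tulapCdf0 b) := by
  intro s t hst
  have := intervalIntegral.intervalIntegral_pos_of_pos_on
    (intervalIntegrable_dlapPmf_round hb0 hb1 s t) (fun x _ => dlapPmf_pos hb0 hb1 _) hst
  rw [integral_dlapPmf_round hb0 hb1] at this
  linarith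

def tulapTrunc (b q : ℝ) : Set ℝ := tulapCdf0 b ⁻¹' Icc (q / 2) (1 - q / 2)

lemma tulapDensity_of_mem {x : ℝ} (hx : x ∈ tulapTrunc b q) :
    tulapDensity b q x = dlapPmf b (round x) / (1 - q) :=
  if_pos hx

lemma tulapDensity_of_notMem {x : ℝ} (hx : x ∉ tulapTrunc b q) : tulapDensity b q x = 0 :=
  if_neg hx

lemma tulapDensity_nonneg (hb0 : 0 < b) (hb1 : b < 1) (hq : q < 1) (x : ℝ) :
    0 ≤ tulapDensity b q x := by
  by_cases hx : x ∈ tulapTrunc b q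
  · rw [tulapDensity_of_mem hx]
    exact div_nonneg (dlapPmf_pos hb0 hb1 _).le (by linarith)
  · rw [tulapDensity_of_notMem hx]

lemma tulapDensity_le (hb0 : 0 < b) (hb1 : b < 1) (hq : q < 1) (x : ℝ) :
    tulapDensity b q x ≤ dlapPmf b (round x) / (1 - q) := by
  by_cases hx : x ∈ tulapTrunc b q
  · rw [tulapDensity_of_mem hx]
  · rw [tulapDensity_of_notMem hx]
    exact div_nonneg (dlapPmf_pos hb0 hb1 _).le (by linarith)

lemma measurable_tulapDensity (hb : 0 < b) : Measurable (tulapDensity b q) :=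
  Measurable.ite ((continuous_tulapCdf0 hb).measurable measurableSet_Icc)
    (measurable_comp_round fun k => (1 - b) / (1 + b) * b ^ k.natAbs / (1 - q)) measurable_const

lemma tulapDensity_le_div (hb0 : 0 < b) (hb1 : b < 1) (hq : q < 1) {s : ℤ} (hs : |s| ≤ 1)
    {x : ℝ} (hx : x ∈ tulapTrunc b q → x - s ∈ tulapTrunc b q) :
    tulapDensity b q x ≤ tulapDensity b q (x - s) / b := by
  by_cases hxI : x ∈ tulapTrunc b q
  · rw [tulapDensity_of_mem hxI, tulapDensity_of_mem (hx hxI), round_sub_intCast,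
      le_div_iff₀ hb0, div_mul_eq_mul_div, mul_comm]
    exact div_le_div_of_nonneg_right (mul_dlapPmf_le hb0.le hb1.le (by simpa using hs))
      (by linarith)
  · rw [tulapDensity_of_notMem hxI]
    exact div_nonneg (tulapDensity_nonneg hb0 hb1 hq _) hb0.le

lemma setLIntegral_Icc_tulapDensity_le (hb0 : 0 < b) (hb1 : b < 1) (hq : q < 1) {s t : ℝ}
    (hst : s ≤ t) :
    ∫⁻ x in Icc s t, ENNReal.ofReal (tulapDensity b q x)
      ≤ ENNReal.ofReal ((tulapCdf0 b t - tulapCdf0 b s) / (1 - q)) := by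
  have hint : IntegrableOn (fun x => dlapPmf b (round x) / (1 - q)) (Icc s t) := by
    rw [integrableOn_Icc_iff_integrableOn_Ioc]
    exact (intervalIntegrable_dlapPmf_round hb0 hb1 s t).1.div_const _
  calc ∫⁻ x in Icc s t, ENNReal.ofReal (tulapDensity b q x)
      ≤ ∫⁻ x in Icc s t, ENNReal.ofReal (dlapPmf b (round x) / (1 - q)) :=
        lintegral_mono fun x => ENNReal.ofReal_le_ofReal (tulapDensity_le hb0 hb1 hq x)
    _ = ENNReal.ofReal (∫ x in s..t, dlapPmf b (round x) / (1 - q)) := by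
        rw [intervalIntegral.integral_of_le hst, ← integral_Icc_eq_integral_Ioc,
          ofReal_integral_eq_lintegral_ofReal hint
            (ae_of_all _ fun x => div_nonneg (dlapPmf_pos hb0 hb1 _).le (by linarith))]
    _ = ENNReal.ofReal ((tulapCdf0 b t - tulapCdf0 b s) / (1 - q)) := by
        rw [intervalIntegral.integral_div, integral_dlapPmf_round hb0 hb1]

lemma setLIntegral_tulapDensity_sub_one_notMem_le (hb0 : 0 < b) (hb1 : b < 1) (hq : q < 1) :
    ∫⁻ x in {x | x ∈ tulapTrunc b q ∧ x - 1 ∉ tulapTrunc b q}, ENNReal.ofReal (tulapDensity b q x)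
      ≤ ENNReal.ofReal ((1 / b - 1) * (q / 2) / (1 - q)) := by
  set N := {x | x ∈ tulapTrunc b q ∧ x - 1 ∉ tulapTrunc b q}
  have hF := strictMono_tulapCdf0 hb0 hb1
  have hN : ∀ x ∈ N, tulapCdf0 b (x - 1) < q / 2 ∧ q / 2 ≤ tulapCdf0 b x := by
    rintro x ⟨hxI, hx⟩
    refine ⟨not_le.1 fun h => hx ⟨h, ?_⟩, hxI.1⟩
    exact (hF.monotone (by linarith)).trans hxI.2
  rcases N.eq_empty_or_nonempty with hempty | ⟨x₀, hx₀⟩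
  · simp [hempty]
  obtain ⟨L, -, hL⟩ : ∃ L ∈ Icc (x₀ - 1) x₀, tulapCdf0 b L = q / 2 :=
    intermediate_value_Icc (by linarith) (continuous_tulapCdf0 hb0).continuousOn
      ⟨(hN x₀ hx₀).1.le, (hN x₀ hx₀).2⟩
  have hsub : N ⊆ Icc L (L + 1) := by
    intro x hx
    obtain ⟨h₁, h₂⟩ := hN x hx
    rw [← hL] at h₁ h₂
    exact ⟨hF.le_iff_le.1 h₂, by linarith [hF.lt_iff_lt.1 h₁]⟩
  have hstep : tulapCdf0 b (L + 1) ≤ q / 2 / b := by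
    rw [le_div_iff₀ hb0, ← hL]
    linarith [mul_tulapCdf0_add_one_le hb0 hb1 L]
  calc ∫⁻ x in N, ENNReal.ofReal (tulapDensity b q x)
      ≤ ∫⁻ x in Icc L (L + 1), ENNReal.ofReal (tulapDensity b q x) := lintegral_mono_set hsub
    _ ≤ ENNReal.ofReal ((tulapCdf0 b (L + 1) - tulapCdf0 b L) / (1 - q)) :=
        setLIntegral_Icc_tulapDensity_le hb0 hb1 hq (by linarith)
    _ ≤ ENNReal.ofReal ((1 / b - 1) * (q / 2) / (1 - q)) := by
        refine ENNReal.ofReal_le_ofReal (div_le_div_of_nonneg_right ?_ (by linarith))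
        linarith [show (1 / b - 1) * (q / 2) = q / 2 / b - q / 2 by ring]

lemma setLIntegral_tulapDensity_add_one_notMem_le (hb0 : 0 < b) (hb1 : b < 1) (hq : q < 1) :
    ∫⁻ x in {x | x ∈ tulapTrunc b q ∧ x + 1 ∉ tulapTrunc b q}, ENNReal.ofReal (tulapDensity b q x)
      ≤ ENNReal.ofReal ((1 / b - 1) * (q / 2) / (1 - q)) := by
  set N := {x | x ∈ tulapTrunc b q ∧ x + 1 ∉ tulapTrunc b q}
  have hF := strictMono_tulapCdf0 hb0 hb1
  have hN : ∀ x ∈ N, tulapCdf0 b x ≤ 1 - q / 2 ∧ 1 - q / 2 < tulapCdf0 b (x + 1) := by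
    rintro x ⟨hxI, hx⟩
    refine ⟨hxI.2, not_le.1 fun h => hx ⟨?_, h⟩⟩
    exact hxI.1.trans (hF.monotone (by linarith))
  rcases N.eq_empty_or_nonempty with hempty | ⟨x₀, hx₀⟩
  · simp [hempty]
  obtain ⟨R, -, hR⟩ : ∃ R ∈ Icc x₀ (x₀ + 1), tulapCdf0 b R = 1 - q / 2 :=
    intermediate_value_Icc (by linarith) (continuous_tulapCdf0 hb0).continuousOn
      ⟨(hN x₀ hx₀).1, (hN x₀ hx₀).2.le⟩
  have hsub : N ⊆ Icc (R - 1) R := by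
    intro x hx
    obtain ⟨h₁, h₂⟩ := hN x hx
    rw [← hR] at h₁ h₂
    exact ⟨by linarith [hF.lt_iff_lt.1 h₂], hF.le_iff_le.1 h₁⟩
  have hstep : 1 - tulapCdf0 b (R - 1) ≤ q / 2 / b := by
    rw [le_div_iff₀ hb0]
    linarith [mul_one_sub_tulapCdf0_sub_one_le hb0 hb1 R]
  calc ∫⁻ x in N, ENNReal.ofReal (tulapDensity b q x)
      ≤ ∫⁻ x in Icc (R - 1) R, ENNReal.ofReal (tulapDensity b q x) := lintegral_mono_set hsub
    _ ≤ ENNReal.ofReal ((tulapCdf0 b R - tulapCdf0 b (R - 1)) / (1 - q)) :=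
        setLIntegral_Icc_tulapDensity_le hb0 hb1 hq (by linarith)
    _ ≤ ENNReal.ofReal ((1 / b - 1) * (q / 2) / (1 - q)) := by
        refine ENNReal.ofReal_le_ofReal (div_le_div_of_nonneg_right ?_ (by linarith))
        linarith [show (1 / b - 1) * (q / 2) = q / 2 / b - q / 2 by ring]

lemma tulapMeasure_zero_le_of_abs_le_one (hb0 : 0 < b) (hb1 : b < 1) (hq : q < 1) {s : ℤ}
    (hs : |s| ≤ 1) {A : Set ℝ} (hA : MeasurableSet A) :
    tulapMeasure 0 b q A ≤ ENNReal.ofReal (1 / b) * tulapMeasure s b q A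
      + ENNReal.ofReal ((1 / b - 1) * (q / 2) / (1 - q)) := by
  rw [tulapMeasure, tulapMeasure, withDensity_apply _ hA, withDensity_apply _ hA]
  simp only [sub_zero]
  refine setLIntegral_le_mul_add (N := {x | x ∈ tulapTrunc b q ∧ x - s ∉ tulapTrunc b q})
    ((measurable_tulapDensity hb0).comp (measurable_sub_const _)).ennreal_ofReal
    (fun x hx => ?_) ?_ A
  · rw [← ENNReal.ofReal_mul (by positivity), one_div_mul_eq_div]
    exact ENNReal.ofReal_le_ofReal
      (tulapDensity_le_div hb0 hb1 hq hs fun hxI => of_not_not fun h => hx ⟨hxI, h⟩)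
  · obtain rfl | rfl | rfl : s = -1 ∨ s = 0 ∨ s = 1 := by
      have := abs_le.1 hs
      omega
    · simpa using setLIntegral_tulapDensity_add_one_notMem_le hb0 hb1 hq
    · simp
    · simpa using setLIntegral_tulapDensity_sub_one_notMem_le hb0 hb1 hq

lemma tulapMeasure_add_apply (m c : ℝ) {B : Set ℝ} (hB : MeasurableSet B) :
    tulapMeasure (m + c) b q B = tulapMeasure m b q ((· + c) ⁻¹' B) := by
  rw [tulapMeasure, tulapMeasure, withDensity_apply _ hB,
    withDensity_apply _ (hB.preimage (measurable_add_const c)),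
    ← (measurePreserving_add_right volume c).setLIntegral_comp_preimage_emb
      (measurableEmbedding_addRight c)]
  simp only [add_sub_add_right_eq_sub]

lemma tulapMeasure_le_of_abs_sub_le_one (hb0 : 0 < b) (hb1 : b < 1) (hq : q < 1)
    {m m' : ℤ} (h : |m' - m| ≤ 1) {B : Set ℝ} (hB : MeasurableSet B) :
    tulapMeasure m b q B ≤ ENNReal.ofReal (1 / b) * tulapMeasure m' b q B
      + ENNReal.ofReal ((1 / b - 1) * (q / 2) / (1 - q)) := by
  have := tulapMeasure_zero_le_of_abs_le_one hb0 hb1 hq h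
    (hB.preimage (measurable_add_const (m : ℝ)))
  rwa [← tulapMeasure_add_apply _ _ hB, ← tulapMeasure_add_apply _ _ hB, zero_add,
    Int.cast_sub, sub_add_cancel] at this

end Tulap

/-- adding Tulap(·, e^(-ε), 2δb/(1-b+2δb)) noise to an integer-valued
statistic of sensitivity 1 satisfies (ε,δ)-differential privacy. -/
theorem tulap_mechanism_dp {𝒳 : Type*} [DecidableEq 𝒳] {n : ℕ} (ε δ : ℝ)
    (hε : 0 < ε) (hδ : 0 ≤ δ) (b q : ℝ) (hb : b = Real.exp (-ε))
    (hq : q = 2 * δ * b / (1 - b + 2 * δ * b))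
    (T : (Fin n → 𝒳) → ℤ)
    (hsens : ∀ X X' : Fin n → 𝒳, hammingDist X X' = 1 → |T X - T X'| ≤ 1) :
    ∀ X X' : Fin n → 𝒳, hammingDist X X' = 1 → ∀ B : Set ℝ, MeasurableSet B →
      tulapMeasure (T X : ℝ) b q B ≤
        ENNReal.ofReal (Real.exp ε) * tulapMeasure (T X' : ℝ) b q B + ENNReal.ofReal δ := by
  intro X X' hX B hB
  have hb0 : 0 < b := hb ▸ exp_pos _
  have hb1 : b < 1 := hb ▸ exp_lt_one_iff.2 (neg_neg_iff_pos.2 hε)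
  have hD : 0 < 1 - b + 2 * δ * b := by nlinarith
  have hq1 : q < 1 := by rw [hq, div_lt_one hD]; linarith
  have hexp : exp ε = 1 / b := by rw [hb, exp_neg, one_div, inv_inv]
  have hδ' : (1 / b - 1) * (q / 2) / (1 - q) = δ := by
    have hq' : 1 - q = (1 - b) / (1 - b + 2 * δ * b) := by
      rw [hq]; field_simp; ring
    have hb1' : 1 - b ≠ 0 := by linarith
    rw [hq', hq]
    generalize 1 - b + 2 * δ * b = D at hD ⊢
    field_simp
  rw [hexp, ← hδ']
  exact tulapMeasure_le_of_abs_sub_le_one hb0 hb1 hq1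
    (by rw [abs_sub_comm]; exact hsens X X' hX) hB
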